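/- arXiv:1005.1584 — 3 statements merged into one kernel-verified Lean document; each statement's English description precedes it below -/
import Mathlib

section
/- Let β > 0, e₀' ∈ ℝ, and let K be a compact subset of ℂ \ [exp(β·e₀'), ∞). Then there exists η > 0 such that for every z ∈ K and every ξ ∈ ℂ with Re ξ ≥ e₀' and |Im ξ| ≤ η/β, one has 1 - z·exp(-β·ξ) ∉ (-∞, 0]; consequently (z, ξ) ↦ Log(1 - z·exp(-β·ξ)) is jointly analytic on K × {ξ : Re ξ > e₀', |Im ξ| < η/β} (interior). -/
open Complex Set

/-!
If `1 - z e^{-βξ} ∈ (-∞, 0]`, then `z = x e^{iβ Im ξ}` for a real `x ≥ e^{β Re ξ} ≥ e^{β e₀'}`, so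
`z` lies within `‖z‖ · β |Im ξ|` of the cut `[e^{β e₀'}, ∞)`. A compact `K` off the cut keeps a
uniform distance `δ` from it and is bounded by some `M`, so `η = δ / (2M)` works. Analyticity
then follows from that of `Log` on the slit plane.
-/

lemma isOpen_setOf_not_im_eq_zero_and_le_re (a : ℝ) :
    IsOpen {z : ℂ | ¬ (z.im = 0 ∧ a ≤ z.re)} :=
  ((isClosed_eq continuous_im continuous_const).inter
    (isClosed_le continuous_const continuous_re)).isOpen_compl

lemma norm_ofReal_mul_exp_sub_ofReal_le {x : ℝ} (hx : 0 ≤ x) (θ : ℝ) :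
    ‖x * exp (I * θ) - x‖ ≤ x * |θ| := by
  rw [← mul_sub_one, norm_mul, norm_real, Real.norm_of_nonneg hx]
  exact mul_le_mul_of_nonneg_left Real.norm_exp_I_mul_ofReal_sub_one_le hx

lemma exists_ofReal_eq_mul_exp_of_one_sub_mul_exp_nonpos {β : ℝ} {z ξ : ℂ}
    (him : (1 - z * exp (-β * ξ)).im = 0) (hre : (1 - z * exp (-β * ξ)).re ≤ 0) :
    ∃ x : ℝ, Real.exp (β * ξ.re) ≤ x ∧ z = x * exp (I * (β * ξ.im : ℝ)) := by
  set w := z * exp (-β * ξ)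
  have hw_im : w.im = 0 := by simpa using him
  have hw_re : 1 ≤ w.re := by simp at hre; linarith
  refine ⟨w.re * Real.exp (β * ξ.re), le_mul_of_one_le_left (Real.exp_pos _).le hw_re, ?_⟩
  have hw : (w.re : ℂ) = w := Complex.ext (by simp) (by simp [hw_im])
  have hβξ : (β : ℂ) * ξ = (β * ξ.re : ℝ) + I * (β * ξ.im : ℝ) := by
    apply Complex.ext <;> simp
  calc z = w * exp (β * ξ) := by
        simp only [w, mul_assoc, ← Complex.exp_add, neg_mul, neg_add_cancel, Complex.exp_zero,
          mul_one]
    _ = w.re * exp (β * ξ) := by rw [hw]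
    _ = _ := by rw [hβξ, Complex.exp_add, ← ofReal_exp]; push_cast; ring

lemma IsCompact.exists_pos_forall_one_sub_mul_exp_not_nonpos {β e₀' : ℝ} (hβ : 0 < β)
    {K : Set ℂ} (hK : IsCompact K)
    (hKD : K ⊆ {z : ℂ | ¬ (z.im = 0 ∧ Real.exp (β * e₀') ≤ z.re)}) :
    ∃ η > 0, ∀ z ∈ K, ∀ ξ : ℂ, e₀' ≤ ξ.re → |ξ.im| ≤ η / β →
      ¬ ((1 - z * exp (-(β : ℂ) * ξ)).im = 0 ∧ (1 - z * exp (-(β : ℂ) * ξ)).re ≤ 0) := by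
  obtain ⟨δ, hδ, hδK⟩ := hK.exists_thickening_subset_open
    (isOpen_setOf_not_im_eq_zero_and_le_re _) hKD
  obtain ⟨M, hM, hKM⟩ := hK.isBounded.exists_pos_norm_le
  refine ⟨δ / (2 * M), by positivity, fun z hz ξ hξre hξim ⟨him, hre⟩ => ?_⟩
  obtain ⟨x, hx, rfl⟩ := exists_ofReal_eq_mul_exp_of_one_sub_mul_exp_nonpos him hre
  have hx0 : 0 ≤ x := ((Real.exp_pos _).trans_le hx).le
  have hθ : |β * ξ.im| ≤ δ / (2 * M) := by
    rwa [abs_mul, abs_of_pos hβ, ← le_div_iff₀' hβ]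
  have hxM : x ≤ M := by
    simpa only [norm_mul, norm_exp_I_mul_ofReal, norm_real, Real.norm_of_nonneg hx0, mul_one]
      using hKM _ hz
  have hdist : dist (x : ℂ) (x * exp (I * (β * ξ.im : ℝ))) < δ := by
    rw [dist_comm, dist_eq]
    calc _ ≤ x * |β * ξ.im| := norm_ofReal_mul_exp_sub_ofReal_le hx0 _
      _ ≤ M * (δ / (2 * M)) := by gcongr
      _ < δ := by field_simp; linarith
  exact hδK (Metric.mem_thickening_iff.2 ⟨_, hz, hdist⟩)
    ⟨by simp, (Real.exp_le_exp.2 (mul_le_mul_of_nonneg_left hξre hβ.le)).trans (by simpa using hx)⟩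

lemma analyticOnNhd_log_one_sub_mul_exp {β : ℂ} {s : Set (ℂ × ℂ)}
    (hs : ∀ p ∈ s, 1 - p.1 * exp (-β * p.2) ∈ slitPlane) :
    AnalyticOnNhd ℂ (fun p : ℂ × ℂ => log (1 - p.1 * exp (-β * p.2))) s :=
  AnalyticOnNhd.clog (fun _ _ => analyticAt_const.sub
    (analyticAt_fst.mul (analyticAt_cexp.comp (analyticAt_const.mul analyticAt_snd)))) hs

/-- Bose case: if `K` is a compact subset of `ℂ \ [exp(β·e₀'), ∞)`,
there exists `η > 0` such that for all `z ∈ K` and `ξ` with `Re ξ ≥ e₀'` and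
`|Im ξ| ≤ η/β`, `1 - z·exp(-β·ξ)` avoids the branch cut `(-∞, 0]`; consequently
`(z, ξ) ↦ Log(1 - z·exp(-β·ξ))` is jointly analytic on
`K × {ξ : Re ξ > e₀', |Im ξ| < η/β}`. -/
theorem stmt_1 (β e₀' : ℝ) (hβ : 0 < β) (K : Set ℂ) (hK : IsCompact K)
    (hKD : K ⊆ {z : ℂ | ¬ (z.im = 0 ∧ Real.exp (β * e₀') ≤ z.re)}) :
    ∃ η > 0,
      (∀ z ∈ K, ∀ ξ : ℂ, e₀' ≤ ξ.re → |ξ.im| ≤ η / β →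
        ¬ ((1 - z * Complex.exp (-(β : ℂ) * ξ)).im = 0 ∧
           (1 - z * Complex.exp (-(β : ℂ) * ξ)).re ≤ 0)) ∧
      AnalyticOn ℂ
        (fun p : ℂ × ℂ => Complex.log (1 - p.1 * Complex.exp (-(β : ℂ) * p.2)))
        (K ×ˢ {ξ : ℂ | e₀' < ξ.re ∧ |ξ.im| < η / β}) := by
  obtain ⟨η, hη, hcut⟩ := hK.exists_pos_forall_one_sub_mul_exp_not_nonpos hβ hKD
  refine ⟨η, hη, hcut, (analyticOnNhd_log_one_sub_mul_exp fun p hp => ?_).analyticOn⟩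
  have h := hcut p.1 hp.1 p.2 hp.2.1.le hp.2.2.le
  rw [mem_slitPlane_iff]
  contrapose! h
  exact ⟨h.2, h.1⟩
end

section
/- Let β > 0, e₀' ∈ ℝ, and let K be a compact subset of ℂ \ (-∞, -exp(β·e₀')]. Then there exists η > 0 such that for every z ∈ K and every ξ ∈ ℂ with Re ξ ≥ e₀' and |Im ξ| ≤ η/β, one has 1 + z·exp(-β·ξ) ∉ (-∞, 0]. -/
open Complex Set

/-!
If `1 + z e^{-βξ}` lies on `(-∞, 0]`, then rotating `z` back by the angle `β Im ξ` gives
`(1 + z e^{-βξ} - 1) e^{β Re ξ}`, a real number `≤ -e^{β e₀'}`, i.e. a point of the excluded ray.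
Since `K` is compact and avoids this closed ray, all rotations of `K` by small enough angles
still avoid it, which bounds `β |Im ξ|`.
-/

theorem isClosed_setOf_im_eq_zero_and_re_le (a : ℝ) :
    IsClosed {z : ℂ | z.im = 0 ∧ z.re ≤ a} :=
  (isClosed_eq continuous_im continuous_const).inter (isClosed_le continuous_re continuous_const)

theorem IsCompact.exists_pos_forall_abs_lt_mul_exp_mem {K U : Set ℂ} (hK : IsCompact K)
    (hU : IsOpen U) (hKU : K ⊆ U) :
    ∃ ε > 0, ∀ z ∈ K, ∀ θ : ℝ, |θ| < ε → z * exp (θ * I) ∈ U := by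
  have hrot : ∀ᶠ θ : ℝ in nhds 0, ∀ z ∈ K, z * exp (θ * I) ∈ U := by
    refine hK.eventually_forall_of_forall_eventually fun z hz => ?_
    have hc : Continuous fun p : ℝ × ℂ => p.2 * exp (p.1 * I) := by fun_prop
    exact hc.continuousAt.preimage_mem_nhds (hU.mem_nhds (by simpa using hKU hz))
  obtain ⟨ε, hε, h⟩ := Metric.eventually_nhds_iff.1 hrot
  exact ⟨ε, hε, fun z hz θ hθ => h (by simpa using hθ) z hz⟩

theorem mul_exp_neg_mul_im_mul_I (z ξ : ℂ) (β : ℝ) :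
    z * exp (↑(-(β * ξ.im)) * I) = z * exp (-(β : ℂ) * ξ) * ↑(Real.exp (β * ξ.re)) := by
  rw [ofReal_exp, mul_assoc, ← exp_add]
  congr 2
  apply Complex.ext <;> simp

/-- Fermi case: if `K` is a compact subset of
`ℂ \ (-∞, -exp(β·e₀')]`, there exists `η > 0` such that for all `z ∈ K` and
`ξ` with `Re ξ ≥ e₀'` and `|Im ξ| ≤ η/β`, the value `1 + z·exp(-β·ξ)` avoids
the branch cut `(-∞, 0]`. -/
theorem stmt_2 (β e₀' : ℝ) (hβ : 0 < β) (K : Set ℂ) (hK : IsCompact K)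
    (hKD : K ⊆ {z : ℂ | ¬ (z.im = 0 ∧ z.re ≤ -Real.exp (β * e₀'))}) :
    ∃ η > 0, ∀ z ∈ K, ∀ ξ : ℂ, e₀' ≤ ξ.re → |ξ.im| ≤ η / β →
      ¬ ((1 + z * Complex.exp (-(β : ℂ) * ξ)).im = 0 ∧
         (1 + z * Complex.exp (-(β : ℂ) * ξ)).re ≤ 0) := by
  obtain ⟨ε, hε, hrot⟩ := hK.exists_pos_forall_abs_lt_mul_exp_mem
    (isClosed_setOf_im_eq_zero_and_re_le _).isOpen_compl hKD
  refine ⟨ε / 2, half_pos hε, fun z hz ξ hre him ⟨hcut_im, hcut_re⟩ => ?_⟩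
  have hangle : |-(β * ξ.im)| < ε := by
    rw [abs_neg, abs_mul, abs_of_pos hβ]
    calc β * |ξ.im| ≤ ε / 2 := (le_div_iff₀' hβ).1 him
      _ < ε := half_lt_self hε
  refine hrot z hz _ hangle ?_
  have hexp : Real.exp (β * e₀') ≤ Real.exp (β * ξ.re) :=
    Real.exp_le_exp.2 (mul_le_mul_of_nonneg_left hre hβ.le)
  rw [mul_exp_neg_mul_im_mul_I]
  simp only [add_im, one_im, zero_add, add_re, one_re] at hcut_im hcut_re
  constructor
  · simp only [im_mul_ofReal, hcut_im, zero_mul]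
  · simp only [re_mul_ofReal]
    nlinarith [Real.exp_pos (β * ξ.re)]
end

section
/- Let X ⊂ ℂ be open, H a Hilbert space, and T : X → B(H) a family of closed densely defined operators (given via bounded-analytic resolvents). Suppose ξ, ξ₀ ∈ ℂ are such that for all ω in an open set U ⊂ X both ξ and ξ₀ are in the resolvent sets, ω ↦ (T(ω) - ξ)⁻¹ is bounded-analytic on U, and ω ↦ (T(ω) - ξ₀)⁻¹ is B₂-analytic on U. Then ω ↦ (T(ω) - ξ)⁻¹ is B₂-analytic on U, and satisfies the first resolvent identity (T(ω) - ξ)⁻¹ = (T(ω) - ξ₀)⁻¹ + (ξ - ξ₀)·(T(ω) - ξ)⁻¹·(T(ω) - ξ₀)⁻¹. -/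
/-- let `T(ω)` be a family of operators such that on an open
set `U`, both `ξ` and `ξ₀` lie in the resolvent set (encoded by two-sided
inverses `Rξ(ω)` of `T(ω) - ξ` and `Rξ₀(ω)` of `T(ω) - ξ₀`), with
`ω ↦ Rξ(ω)` bounded-analytic and `ω ↦ Rξ₀(ω)` analytic in the
Hilbert–Schmidt class `B₂`. Then `ω ↦ Rξ(ω)` is `B₂`-analytic on `U`, and
the first resolvent identity
`Rξ(ω) = Rξ₀(ω) + (ξ - ξ₀)·Rξ(ω)·Rξ₀(ω)` holds on `U`. The class `B₂` is
modelled as a normed `ℂ`-space with an injective embedding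
`ι₂ : B₂ → B(H)` and a compatible continuous left module action `lmul`. -/
theorem stmt_12 {H B₂ : Type*}
    [NormedAddCommGroup H] [InnerProductSpace ℂ H] [CompleteSpace H]
    [NormedAddCommGroup B₂] [NormedSpace ℂ B₂]
    (ι₂ : B₂ →L[ℂ] (H →L[ℂ] H)) (hι₂ : Function.Injective ι₂)
    (lmul : (H →L[ℂ] H) →L[ℂ] B₂ →L[ℂ] B₂)
    (hcompat : ∀ (A : H →L[ℂ] H) (s : B₂), ι₂ (lmul A s) = A ∘L ι₂ s)
    (X U : Set ℂ) (hX : IsOpen X) (hU : IsOpen U) (hUX : U ⊆ X)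
    (T : ℂ → (H →L[ℂ] H)) (ξ ξ₀ : ℂ)
    (Rξ Rξ₀ : ℂ → (H →L[ℂ] H))
    (hinv : ∀ ω ∈ U, (T ω - ξ • 1) ∘L Rξ ω = 1 ∧ Rξ ω ∘L (T ω - ξ • 1) = 1)
    (hinv₀ : ∀ ω ∈ U,
      (T ω - ξ₀ • 1) ∘L Rξ₀ ω = 1 ∧ Rξ₀ ω ∘L (T ω - ξ₀ • 1) = 1)
    (hRξ : AnalyticOnNhd ℂ Rξ U)
    (S₀ : ℂ → B₂) (hS₀ : AnalyticOnNhd ℂ S₀ U)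
    (hS₀eq : ∀ ω ∈ U, ι₂ (S₀ ω) = Rξ₀ ω) :
    (∃ S : ℂ → B₂, AnalyticOnNhd ℂ S U ∧ ∀ ω ∈ U, ι₂ (S ω) = Rξ ω) ∧
    ∀ ω ∈ U, Rξ ω = Rξ₀ ω + (ξ - ξ₀) • (Rξ ω ∘L Rξ₀ ω) := by
  have key : ∀ ω ∈ U, Rξ ω = Rξ₀ ω + (ξ - ξ₀) • (Rξ ω ∘L Rξ₀ ω) := by
    intro ω hω
    obtain ⟨h1, h2⟩ := hinv ω hω
    obtain ⟨h3, h4⟩ := hinv₀ ω hω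
    have e1 : Rξ ω ∘L ((T ω - ξ₀ • 1) ∘L Rξ₀ ω) = Rξ ω := by rw [h3, ContinuousLinearMap.one_def, ContinuousLinearMap.comp_id]
    have e2 : (Rξ ω ∘L (T ω - ξ • 1)) ∘L Rξ₀ ω = Rξ₀ ω := by rw [h2, ContinuousLinearMap.one_def, ContinuousLinearMap.id_comp]
    have e3 : Rξ ω ∘L ((T ω - ξ₀ • 1) ∘L Rξ₀ ω)
        - (Rξ ω ∘L (T ω - ξ • 1)) ∘L Rξ₀ ω
        = (ξ - ξ₀) • (Rξ ω ∘L Rξ₀ ω) := by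
      rw [← ContinuousLinearMap.comp_assoc]
      rw [← ContinuousLinearMap.sub_comp, ← ContinuousLinearMap.comp_sub]
      have : (T ω - ξ₀ • 1) - (T ω - ξ • 1) = (ξ - ξ₀) • (1 : H →L[ℂ] H) := by
        rw [sub_smul]; abel
      rw [this]
      simp [ContinuousLinearMap.comp_smul, ContinuousLinearMap.smul_comp,
        ContinuousLinearMap.one_def, ContinuousLinearMap.comp_id,
        ContinuousLinearMap.id_comp]
    rw [e1, e2] at e3
    rw [← e3]; abel
  refine ⟨⟨fun ω => S₀ ω + (ξ - ξ₀) • lmul (Rξ ω) (S₀ ω), ?_, ?_⟩, key⟩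
  · refine hS₀.add (analyticOnNhd_const.smul ?_)
    intro ω hω
    exact AnalyticAt.comp (f := fun x => (Rξ x, S₀ x))
      (g := fun p : (H →L[ℂ] H) × B₂ => lmul p.1 p.2)
      (lmul.analyticAt_bilinear _) ((hRξ ω hω).prod (hS₀ ω hω))
  · intro ω hω
    rw [map_add, map_smul, hcompat, hS₀eq ω hω]
    exact (key ω hω).symm
end
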